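/- arXiv:2204.02343 — 2 statements merged into one kernel-verified Lean document; each statement's English description precedes it below -/
import Mathlib

section
/- Assume μ, σ : ℝ → ℝ satisfy conditions (A1)–(A4) with parameters p₀, p₁ ∈ [2,∞), ℓ_μ ∈ (0,∞), ℓ_σ ∈ [0, ℓ_μ/2], and let μ̃, σ̃ : ℝ → ℝ be the transformed coefficients defined via the function G. Then σ̃ satisfies condition (A3): there exists c ∈ (0,∞) such that for all x, y ∈ ℝ, |σ̃(x) − σ̃(y)| ≤ c·(1 + |x|^{ℓ_σ} + |y|^{ℓ_σ})·|x − y|. -/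
/-- For `ξ₁ < … < ξ_k` and `i ∈ {0,…,k}`, `piece k ξ i` is the open interval
`(ξ_i, ξ_{i+1})` of the partition of `ℝ`, with the conventions `ξ₀ = -∞`, `ξ_{k+1} = ∞`. -/
def piece (k : ℕ) (ξ : Fin k → ℝ) (i : Fin (k + 1)) : Set ℝ :=
  {x : ℝ | (∀ j : Fin k, (j : ℕ) < (i : ℕ) → ξ j < x) ∧
    ∀ j : Fin k, (i : ℕ) ≤ (j : ℕ) → x < ξ j}

/-- The bump function `φ(x) = (1 - x²)⁴ · 1_{[-1,1]}(x)`. -/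
noncomputable def phi (x : ℝ) : ℝ := if x ∈ Set.Icc (-1 : ℝ) 1 then (1 - x ^ 2) ^ 4 else 0

/-- The transformation `G(x) = x + Σ_{i=1}^k α_i (x - ξ_i)|x - ξ_i| φ((x - ξ_i)/ν)`. -/
noncomputable def Gfun (k : ℕ) (ξ α : Fin k → ℝ) (ν : ℝ) (x : ℝ) : ℝ :=
  x + ∑ i : Fin k, α i * (x - ξ i) * |x - ξ i| * phi ((x - ξ i) / ν)

/-! `G' = 1 + ∑ α_i D(· - ξ_i)`, where `D` is the derivative of `t ↦ t|t|φ(t/ν)`. Since `D` is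
Lipschitz, bounded by `2ν` and supported in `(-ν, ν)`, and the neighbourhoods `(ξ_i - ν, ξ_i + ν)`
are disjoint, `G'` is Lipschitz, takes values in `[1/2, 3/2]` and equals `1` far out. The bound
`G' ≥ 1/2` makes `G⁻¹` `2`-Lipschitz. In `G'(u)σ(u) - G'(v)σ(v)` an increment of `G'` is paired only
with a value of `σ` on a bounded set, where `σ` is bounded, so `G'σ` keeps the weighted Lipschitz
bound of `σ`; composing with the Lipschitz map `G⁻¹` changes only the constant. -/

open Set NNReal

def PolyLipschitzWith (ℓ C : ℝ) (f : ℝ → ℝ) : Prop :=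
  ∀ x y, |f x - f y| ≤ C * (1 + |x| ^ ℓ + |y| ^ ℓ) * |x - y|

lemma one_le_one_add_rpow_add_rpow (ℓ x y : ℝ) : 1 ≤ 1 + |x| ^ ℓ + |y| ^ ℓ := by
  have := Real.rpow_nonneg (abs_nonneg x) ℓ
  have := Real.rpow_nonneg (abs_nonneg y) ℓ
  linarith

lemma LipschitzWith.exists_rpow_abs_le {K : ℝ≥0} {h : ℝ → ℝ} (hh : LipschitzWith K h) {ℓ : ℝ}
    (hℓ : 0 ≤ ℓ) : ∃ A, 0 ≤ A ∧ ∀ x, |h x| ^ ℓ ≤ A * (1 + |x| ^ ℓ) := by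
  refine ⟨(|h 0| + K) ^ ℓ, by positivity, fun x => ?_⟩
  have hlin : |h x| ≤ (|h 0| + K) * max 1 |x| := by
    have hd : |h x - h 0| ≤ K * |x| := by simpa [Real.dist_eq] using hh.dist_le_mul x 0
    have := abs_add_le (h x - h 0) (h 0)
    rw [sub_add_cancel] at this
    nlinarith [le_max_left 1 |x|, le_max_right 1 |x|, abs_nonneg (h 0), K.2]
  have hmax : max 1 |x| ^ ℓ ≤ 1 + |x| ^ ℓ := by
    rcases max_cases 1 |x| with ⟨h1, -⟩ | ⟨h1, -⟩ <;> rw [h1]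
    · simp [Real.rpow_nonneg (abs_nonneg x)]
    · simp
  calc |h x| ^ ℓ ≤ ((|h 0| + K) * max 1 |x|) ^ ℓ := by gcongr
    _ = (|h 0| + K) ^ ℓ * max 1 |x| ^ ℓ := Real.mul_rpow (by positivity) (by positivity)
    _ ≤ (|h 0| + K) ^ ℓ * (1 + |x| ^ ℓ) := by gcongr

namespace PolyLipschitzWith

variable {ℓ C : ℝ} {f g : ℝ → ℝ}

lemma mono (hf : PolyLipschitzWith ℓ C f) {C' : ℝ} (hC : C ≤ C') : PolyLipschitzWith ℓ C' f :=
  fun x y => (hf x y).trans <| by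
    have := one_le_one_add_rpow_add_rpow ℓ x y
    gcongr

lemma exists_bound (hf : PolyLipschitzWith ℓ C f) (hℓ : 0 ≤ ℓ) (R : ℝ) :
    ∃ M, 0 ≤ M ∧ ∀ x, |x| ≤ R → |f x| ≤ M := by
  refine ⟨|f 0| + |C| * (2 + |R| ^ ℓ) * |R|, by positivity, fun x hx => ?_⟩
  have hxR : |x| ≤ |R| := hx.trans (le_abs_self R)
  have hweight : (1 + |x| ^ ℓ + |0| ^ ℓ) * |x - 0| ≤ (2 + |R| ^ ℓ) * |R| := by
    have : |(0 : ℝ)| ^ ℓ ≤ 1 := by simpa using Real.zero_rpow_le_one ℓ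
    rw [sub_zero]
    have := Real.rpow_le_rpow (abs_nonneg x) hxR hℓ
    exact mul_le_mul (by linarith) hxR (abs_nonneg x) (by positivity)
  calc |f x| ≤ |f 0| + |f x - f 0| := by
        simpa using abs_add_le (f 0) (f x - f 0)
    _ ≤ |f 0| + |C| * ((1 + |x| ^ ℓ + |0| ^ ℓ) * |x - 0|) := by
        gcongr
        exact (hf x 0).trans (by rw [mul_assoc]; gcongr; exact le_abs_self C)
    _ ≤ |f 0| + |C| * (2 + |R| ^ ℓ) * |R| := by rw [mul_assoc]; gcongr

lemma mul_lipschitzWith (hg : PolyLipschitzWith ℓ C g) (hℓ : 0 ≤ ℓ) {L : ℝ≥0}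
    (hf : LipschitzWith L f) {B R : ℝ} (hfB : ∀ x, |f x| ≤ B)
    (hfR : ∀ x y, R < |x| → R < |y| → f x = f y) :
    ∃ C', PolyLipschitzWith ℓ C' (fun x => f x * g x) := by
  obtain ⟨M, hM, hgM⟩ := hg.exists_bound hℓ R
  refine ⟨B * C + M * L, fun x y => ?_⟩
  set w := 1 + |x| ^ ℓ + |y| ^ ℓ
  have hw : 1 ≤ w := one_le_one_add_rpow_add_rpow ℓ x y
  have hB : 0 ≤ B := (abs_nonneg _).trans (hfB 0)
  have hfL : |f x - f y| ≤ L * |x - y| := by simpa [Real.dist_eq] using hf.dist_le_mul x y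
  have hgd : |g x - g y| ≤ C * w * |x - y| := hg x y
  have hprod : |f x * g x - f y * g y| ≤ B * |g x - g y| + M * (L * |x - y|) := by
    have hfg : ∀ a, |f a * (g x - g y)| ≤ B * |g x - g y| := fun a => by
      rw [abs_mul]; exact mul_le_mul_of_nonneg_right (hfB a) (abs_nonneg _)
    have hdg : ∀ a, |g a| ≤ M → |(f x - f y) * g a| ≤ M * (L * |x - y|) := fun a ha => by
      rw [abs_mul, mul_comm]; exact mul_le_mul ha hfL (abs_nonneg _) hM
    -- pair the increment of `f` with `g` at a point of the ball `|·| ≤ R`, if there is one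
    by_cases hx : |x| ≤ R
    · calc |f x * g x - f y * g y| = |f y * (g x - g y) + (f x - f y) * g x| := by ring_nf
        _ ≤ B * |g x - g y| + M * (L * |x - y|) :=
          (abs_add_le _ _).trans (add_le_add (hfg y) (hdg x (hgM x hx)))
    by_cases hy : |y| ≤ R
    · calc |f x * g x - f y * g y| = |f x * (g x - g y) + (f x - f y) * g y| := by ring_nf
        _ ≤ B * |g x - g y| + M * (L * |x - y|) :=
          (abs_add_le _ _).trans (add_le_add (hfg x) (hdg y (hgM y hy)))
    · rw [← hfR x y (not_le.1 hx) (not_le.1 hy), ← mul_sub]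
      have : 0 ≤ M * (L * |x - y|) := by positivity
      linarith [hfg x]
  calc |f x * g x - f y * g y| ≤ B * |g x - g y| + M * (L * |x - y|) := hprod
    _ ≤ B * (C * w * |x - y|) + M * (L * (w * |x - y|)) :=
        add_le_add (mul_le_mul_of_nonneg_left hgd hB)
          (by gcongr; exact le_mul_of_one_le_left (abs_nonneg _) hw)
    _ = (B * C + M * L) * w * |x - y| := by ring

lemma comp_lipschitzWith (hf : PolyLipschitzWith ℓ C f) (hℓ : 0 ≤ ℓ) {K : ℝ≥0} {h : ℝ → ℝ}
    (hh : LipschitzWith K h) : ∃ C', PolyLipschitzWith ℓ C' (f ∘ h) := by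
  obtain ⟨A, hA, hhA⟩ := hh.exists_rpow_abs_le hℓ
  have hf' := hf.mono (le_max_left C 0)
  refine ⟨max C 0 * (1 + 2 * A) * K, fun x y => ?_⟩
  have hd : |h x - h y| ≤ K * |x - y| := by simpa [Real.dist_eq] using hh.dist_le_mul x y
  have hw : 1 + |h x| ^ ℓ + |h y| ^ ℓ ≤ (1 + 2 * A) * (1 + |x| ^ ℓ + |y| ^ ℓ) := by
    have := Real.rpow_nonneg (abs_nonneg x) ℓ
    have := Real.rpow_nonneg (abs_nonneg y) ℓ
    nlinarith [hhA x, hhA y]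
  calc |f (h x) - f (h y)| ≤ max C 0 * (1 + |h x| ^ ℓ + |h y| ^ ℓ) * |h x - h y| := hf' _ _
    _ ≤ max C 0 * ((1 + 2 * A) * (1 + |x| ^ ℓ + |y| ^ ℓ)) * (K * |x - y|) := by gcongr
    _ = max C 0 * (1 + 2 * A) * K * (1 + |x| ^ ℓ + |y| ^ ℓ) * |x - y| := by ring

end PolyLipschitzWith

lemma lipschitzWith_of_rightInverse_of_le_deriv {f f' g : ℝ → ℝ}
    (hf : ∀ x, HasDerivAt f (f' x) x) {c : ℝ≥0} (hc : 0 < c) (hf' : ∀ x, (c : ℝ) ≤ f' x)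
    (hg : Function.RightInverse g f) : LipschitzWith c⁻¹ g := by
  have hmono : ∀ x y, x ≤ y → c * (y - x) ≤ f y - f x :=
    mul_sub_le_image_sub_of_le_deriv (fun x => (hf x).differentiableAt)
      (fun x => (hf x).deriv ▸ hf' x)
  refine (AntilipschitzWith.of_le_mul_dist fun x y => ?_).to_rightInverse hg
  rw [Real.dist_eq, Real.dist_eq, NNReal.coe_inv, ← div_eq_inv_mul,
    le_div_iff₀' (by exact_mod_cast hc)]
  rcases le_total x y with hxy | hxy
  · rw [abs_sub_comm, abs_of_nonneg (sub_nonneg.2 hxy), abs_sub_comm]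
    exact (hmono x y hxy).trans (le_abs_self _)
  · rw [abs_of_nonneg (sub_nonneg.2 hxy)]
    exact (hmono y x hxy).trans (le_abs_self _)

lemma phi_eq_max_pow (s : ℝ) : phi s = max (1 - s ^ 2) 0 ^ 4 := by
  unfold phi
  split_ifs with hs
  · rw [max_eq_left (by nlinarith [hs.1, hs.2])]
  · have : 1 < s ^ 2 := by
      rw [mem_Icc, not_and_or, not_le, not_le] at hs
      rcases hs with hs | hs <;> nlinarith
    rw [max_eq_right (by linarith)]; norm_num

lemma hasDerivAt_max_zero_pow (n : ℕ) (u : ℝ) :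
    HasDerivAt (fun v : ℝ => max v 0 ^ (n + 2)) (((n : ℝ) + 2) * max u 0 ^ (n + 1)) u := by
  have hpow : HasDerivAt (fun v : ℝ => v ^ (n + 2)) (((n : ℝ) + 2) * u ^ (n + 1)) u := by
    simpa using hasDerivAt_pow (n + 2) u
  rcases lt_trichotomy u 0 with hu | rfl | hu
  · rw [max_eq_right hu.le, zero_pow (Nat.succ_ne_zero n), mul_zero]
    refine (hasDerivAt_const u (0 : ℝ)).congr_of_eventuallyEq ?_
    filter_upwards [Iio_mem_nhds hu] with v hv
    simp [max_eq_right (le_of_lt (mem_Iio.1 hv))]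
  · have hleft : HasDerivWithinAt (fun v : ℝ => max v 0 ^ (n + 2)) 0 (Iic 0) 0 :=
      (hasDerivWithinAt_const (0 : ℝ) (Iic 0) (0 : ℝ)).congr
        (fun v hv => by simp [max_eq_right (mem_Iic.1 hv)]) (by simp)
    have hright : HasDerivWithinAt (fun v : ℝ => max v 0 ^ (n + 2)) 0 (Ici 0) 0 :=
      ((hpow.hasDerivWithinAt (s := Ici 0)).congr
        (fun v hv => by simp [max_eq_left (mem_Ici.1 hv)]) (by simp)).congr_deriv (by simp)
    simpa [Iic_union_Ici] using hleft.union hright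
  · rw [max_eq_left hu.le]
    refine hpow.congr_of_eventuallyEq ?_
    filter_upwards [Ioi_mem_nhds hu] with v hv
    simp [max_eq_left (le_of_lt (mem_Ioi.1 hv))]

lemma hasDerivAt_mul_abs (t : ℝ) : HasDerivAt (fun s => s * |s|) (2 * |t|) t := by
  have hsplit : ∀ s : ℝ, s * |s| = max s 0 ^ 2 - max (-s) 0 ^ 2 ∧
      2 * |s| = 2 * max s 0 + 2 * max (-s) 0 := by
    intro s
    rcases le_total 0 s with hs | hs
    · simp [abs_of_nonneg hs, max_eq_left hs, max_eq_right (neg_nonpos.2 hs)]; ring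
    · simp [abs_of_nonpos hs, max_eq_right hs, max_eq_left (neg_nonneg.2 hs)]; ring
  have h := (hasDerivAt_max_zero_pow 0 t).sub
    ((hasDerivAt_max_zero_pow 0 (-t)).comp t (hasDerivAt_neg t))
  simp only [Function.comp_def, CharP.cast_eq_zero, zero_add, pow_one, mul_neg, mul_one,
    sub_neg_eq_add] at h
  rw [(hsplit t).2]
  exact h.congr_of_eventuallyEq (Filter.Eventually.of_forall fun s => (hsplit s).1)

lemma hasDerivAt_phi (s : ℝ) :
    HasDerivAt phi (-8 * s * max (1 - s ^ 2) 0 ^ 3) s := by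
  have h := (hasDerivAt_max_zero_pow 2 (1 - s ^ 2)).comp s ((hasDerivAt_pow 2 s).const_sub 1)
  rw [show phi = (fun v : ℝ => max v 0 ^ (2 + 2)) ∘ (fun v => 1 - v ^ 2) from
    funext phi_eq_max_pow]
  exact h.congr_deriv (by norm_num; ring)

noncomputable def bumpProfile (ν s : ℝ) : ℝ := s * (1 - (s / ν) ^ 2) ^ 3 * (2 - 10 * (s / ν) ^ 2)

/-- The derivative of `t ↦ t|t|φ(t/ν)`. Clamping `|t|` to `[0, ν]` writes it as a polynomial
composed with a `1`-Lipschitz map, which is how its Lipschitz continuity is obtained. -/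
noncomputable def bumpDeriv (ν t : ℝ) : ℝ := bumpProfile ν (min |t| ν)

lemma bumpDeriv_eq_zero {ν t : ℝ} (hν : ν ≠ 0) (ht : ν ≤ |t|) : bumpDeriv ν t = 0 := by
  simp [bumpDeriv, bumpProfile, min_eq_right ht, div_self hν]

lemma hasDerivAt_mul_abs_mul_phi {ν : ℝ} (hν : 0 < ν) (t : ℝ) :
    HasDerivAt (fun t => t * |t| * phi (t / ν)) (bumpDeriv ν t) t := by
  have h := (hasDerivAt_mul_abs t).mul ((hasDerivAt_phi (t / ν)).comp t
    ((hasDerivAt_id t).div_const ν))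
  refine h.congr_deriv ?_
  simp only [phi_eq_max_pow, Function.comp_apply, id]
  rcases le_or_gt ν |t| with ht | ht
  · have : 1 - (t / ν) ^ 2 ≤ 0 := by
      rw [sub_nonpos, div_pow, one_le_div (by positivity), ← sq_abs t]
      exact pow_le_pow_left₀ hν.le ht 2
    simp [max_eq_right this, bumpDeriv_eq_zero hν.ne' ht]
  · have hq : 0 ≤ 1 - (t / ν) ^ 2 := by
      rw [sub_nonneg, div_pow, div_le_one (by positivity), ← sq_abs]
      exact pow_le_pow_left₀ (abs_nonneg t) ht.le 2
    have habs : (|t| / ν) ^ 2 = (t / ν) ^ 2 := by rw [div_pow, sq_abs, div_pow]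
    rw [max_eq_left hq, bumpDeriv, min_eq_left ht.le, bumpProfile, habs]
    field_simp
    rw [← sq_abs t]
    ring

lemma abs_bumpDeriv_le {ν : ℝ} (hν : 0 < ν) (t : ℝ) : |bumpDeriv ν t| ≤ 2 * ν := by
  set s := min |t| ν
  have hs0 : 0 ≤ s := le_min (abs_nonneg t) hν.le
  have hsν : s ≤ ν := min_le_right _ _
  set q := (s / ν) ^ 2
  have hq0 : 0 ≤ q := by positivity
  have hq1 : q ≤ 1 := by
    rw [show q = (s / ν) ^ 2 from rfl, div_pow, div_le_one (by positivity)]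
    exact pow_le_pow_left₀ hs0 hsν 2
  have hpoly : |(1 - q) ^ 3 * (2 - 10 * q)| ≤ 2 := by
    have h3 : (1 - q) ^ 3 ≤ 1 - q := by
      nlinarith [sq_nonneg (1 - q), mul_nonneg hq0 (sub_nonneg.2 hq1)]
    have h30 : 0 ≤ (1 - q) ^ 3 := pow_nonneg (by linarith) 3
    rw [abs_le]; constructor <;> nlinarith [sq_nonneg (q - 3 / 5)]
  calc |bumpDeriv ν t| = s * |(1 - q) ^ 3 * (2 - 10 * q)| := by
        rw [bumpDeriv, bumpProfile, mul_assoc, abs_mul, abs_of_nonneg hs0]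
    _ ≤ ν * 2 := mul_le_mul hsν hpoly (abs_nonneg _) hν.le
    _ = 2 * ν := mul_comm _ _

lemma exists_lipschitzWith_bumpDeriv {ν : ℝ} (hν : 0 ≤ ν) :
    ∃ K, LipschitzWith K (bumpDeriv ν) := by
  have hprofile : ContDiff ℝ 1 (bumpProfile ν) := by unfold bumpProfile; fun_prop
  obtain ⟨K, hK⟩ := hprofile.contDiffOn.exists_lipschitzOnWith one_ne_zero (convex_Icc 0 ν)
    isCompact_Icc
  have hclamp : LipschitzWith 1 fun t : ℝ => min |t| ν := lipschitzWith_one_norm.min_const ν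
  have hmaps : MapsTo (fun t : ℝ => min |t| ν) univ (Icc 0 ν) :=
    fun t _ => ⟨le_min (abs_nonneg t) hν, min_le_right _ _⟩
  exact ⟨K * 1, lipschitzOnWith_univ.1 (hK.comp hclamp.lipschitzOnWith hmaps)⟩

lemma two_mul_lt_abs_sub_of_strictMono {k : ℕ} {ξ : Fin k → ℝ} (hξ : StrictMono ξ) {ν : ℝ}
    (hν : ∀ i j : Fin k, (i : ℕ) + 1 = (j : ℕ) → ν < (ξ j - ξ i) / 2) :
    Pairwise fun i j => 2 * ν < |ξ i - ξ j| := by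
  have hlt : ∀ i j : Fin k, i < j → 2 * ν < |ξ i - ξ j| := by
    intro i j hij
    have hsucc : (i : ℕ) + 1 < k := lt_of_le_of_lt (Nat.succ_le_of_lt hij) j.isLt
    have hgap := hν i ⟨(i : ℕ) + 1, hsucc⟩ rfl
    have hle : ξ ⟨(i : ℕ) + 1, hsucc⟩ ≤ ξ j := hξ.monotone (Fin.mk_le_of_le_val hij)
    rw [abs_sub_comm, abs_of_pos (sub_pos.2 (hξ hij))]
    linarith
  intro i j hij
  rcases lt_or_gt_of_ne hij with h | h
  · exact hlt i j h
  · rw [abs_sub_comm]; exact hlt j i h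

noncomputable def Gderiv (k : ℕ) (ξ α : Fin k → ℝ) (ν x : ℝ) : ℝ :=
  1 + ∑ i, α i * bumpDeriv ν (x - ξ i)

section Gderiv

variable {k : ℕ} {ξ α : Fin k → ℝ} {ν : ℝ}

lemma hasDerivAt_Gfun (hν : 0 < ν) (x : ℝ) :
    HasDerivAt (Gfun k ξ α ν) (Gderiv k ξ α ν x) x := by
  have hterm : ∀ i, HasDerivAt (fun x => α i * (x - ξ i) * |x - ξ i| * phi ((x - ξ i) / ν))
      (α i * bumpDeriv ν (x - ξ i)) x := by
    intro i
    have := ((hasDerivAt_mul_abs_mul_phi hν (x - ξ i)).comp x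
      ((hasDerivAt_id x).sub_const (ξ i))).const_mul (α i)
    simpa [Function.comp_def, mul_assoc] using this
  exact (hasDerivAt_id x).add (HasDerivAt.fun_sum fun i _ => hterm i)

lemma Gderiv_eq_one (hν : ν ≠ 0) {x : ℝ} (hx : ∀ i, ν ≤ |x - ξ i|) : Gderiv k ξ α ν x = 1 := by
  simp [Gderiv, bumpDeriv_eq_zero hν (hx _)]

lemma Gderiv_eq_one_of_lt_abs (hν : 0 ≤ ν) {x : ℝ} (hx : ∑ i, |ξ i| + ν < |x|) :
    Gderiv k ξ α ν x = 1 := by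
  rcases hν.eq_or_lt with rfl | hν
  · simp [Gderiv, bumpDeriv, bumpProfile]
  refine Gderiv_eq_one hν.ne' fun i => ?_
  have hi : |ξ i| ≤ ∑ j, |ξ j| :=
    Finset.single_le_sum (fun j _ => abs_nonneg (ξ j)) (Finset.mem_univ i)
  have := abs_sub_abs_le_abs_sub x (ξ i)
  linarith

lemma abs_Gderiv_sub_one_le (hν : 0 < ν) (hsep : Pairwise fun i j => 2 * ν < |ξ i - ξ j|)
    (hα : ∀ i, ν * (4 * |α i|) ≤ 1) (x : ℝ) : |Gderiv k ξ α ν x - 1| ≤ 1 / 2 := by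
  by_cases hnear : ∃ i, |x - ξ i| < ν
  · obtain ⟨i, hi⟩ := hnear
    -- at most one bump is active at `x`
    have hfar : ∀ j, j ≠ i → ν ≤ |x - ξ j| := fun j hji => by
      have := hsep hji
      have := abs_sub_le (ξ j) x (ξ i)
      rw [abs_sub_comm (ξ j) x] at this
      linarith
    rw [Gderiv, add_sub_cancel_left, Finset.sum_eq_single i
      (fun j _ hji => by rw [bumpDeriv_eq_zero hν.ne' (hfar j hji), mul_zero]) (by simp), abs_mul]
    nlinarith [abs_bumpDeriv_le hν (x - ξ i), abs_nonneg (α i), hα i]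
  · simp only [not_exists, not_lt] at hnear
    rw [Gderiv_eq_one hν.ne' hnear]
    norm_num

lemma exists_lipschitzWith_Gderiv (hν : 0 ≤ ν) : ∃ K, LipschitzWith K (Gderiv k ξ α ν) := by
  obtain ⟨K, hK⟩ := exists_lipschitzWith_bumpDeriv hν
  refine ⟨(∑ i, ‖α i‖₊) * K, LipschitzWith.of_dist_le_mul fun x y => ?_⟩
  have hterm : ∀ i, |α i * bumpDeriv ν (x - ξ i) - α i * bumpDeriv ν (y - ξ i)|
      ≤ |α i| * (K * |x - y|) := fun i => by
    rw [← mul_sub, abs_mul]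
    gcongr
    simpa [Real.dist_eq] using hK.dist_le_mul (x - ξ i) (y - ξ i)
  calc dist (Gderiv k ξ α ν x) (Gderiv k ξ α ν y)
      = |∑ i, (α i * bumpDeriv ν (x - ξ i) - α i * bumpDeriv ν (y - ξ i))| := by
        rw [Real.dist_eq, Gderiv, Gderiv, Finset.sum_sub_distrib, add_sub_add_left_eq_sub]
    _ ≤ ∑ i, |α i| * (K * |x - y|) :=
        (Finset.abs_sum_le_sum_abs _ _).trans (Finset.sum_le_sum fun i _ => hterm i)
    _ = ↑((∑ i, ‖α i‖₊) * K) * dist x y := by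
        simp [Finset.sum_mul, Real.dist_eq, mul_assoc]

end Gderiv

theorem stmt_10_general (ℓσ : ℝ) (hℓσ0 : 0 ≤ ℓσ)
    (σ : ℝ → ℝ)
    -- (A2): discontinuity points ξ₁ < … < ξ_k, k ≥ 1
    (k : ℕ) (ξ : Fin k → ℝ) (hξ : StrictMono ξ)
    -- (A3)
    (c₃ : ℝ)
    (hA3 : ∀ x y : ℝ, |σ x - σ y| ≤ c₃ * (1 + |x| ^ ℓσ + |y| ^ ℓσ) * |x - y|)
    (α : Fin k → ℝ)
    -- ν ∈ (0, ρ_{ξ,α}):  ν·8|α_i| < 1 encodes ν < 1/(8|α_i|) with the convention 1/0 = ∞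
    (ν : ℝ) (hν0 : 0 < ν)
    (hν1 : ∀ i : Fin k, ν * (8 * |α i|) < 1)
    (hν2 : ∀ i j : Fin k, (i : ℕ) + 1 = (j : ℕ) → ν < (ξ j - ξ i) / 2)
    -- G is differentiable with derivative G'; G' is differentiable off the points ξ_i
    -- with derivative G'', extended to the points ξ_i by the prescribed formula
    (G' Ginv : ℝ → ℝ)
    (hG' : ∀ x : ℝ, HasDerivAt (Gfun k ξ α ν) (G' x) x)
    -- Ginv is the inverse of the bijection G
    (hGinv2 : ∀ x : ℝ, Gfun k ξ α ν (Ginv x) = x) :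
    -- μ̃ = (G'·μ + ½·G''·σ²) ∘ G⁻¹  and  σ̃ = (G'·σ) ∘ G⁻¹
    ∃ c : ℝ, 0 < c ∧ ∀ x y : ℝ,
      |(G' (Ginv x) * σ (Ginv x)) - (G' (Ginv y) * σ (Ginv y))|
        ≤ c * (1 + |x| ^ ℓσ + |y| ^ ℓσ) * |x - y| := by
  obtain rfl : G' = Gderiv k ξ α ν := funext fun x => (hG' x).unique (hasDerivAt_Gfun hν0 x)
  have hnear : ∀ x, |Gderiv k ξ α ν x - 1| ≤ 1 / 2 :=
    abs_Gderiv_sub_one_le hν0 (two_mul_lt_abs_sub_of_strictMono hξ hν2)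
      fun i => by linarith [hν1 i, abs_nonneg (α i)]
  obtain ⟨L, hL⟩ := exists_lipschitzWith_Gderiv (k := k) (ξ := ξ) (α := α) hν0.le
  obtain ⟨C, hC⟩ := PolyLipschitzWith.mul_lipschitzWith (f := Gderiv k ξ α ν) (g := σ) hA3 hℓσ0
    hL (B := 3 / 2)
    (fun x => by linarith [hnear x, abs_sub_abs_le_abs_sub (Gderiv k ξ α ν x) 1, abs_one (α := ℝ)])
    fun x y hx hy => by rw [Gderiv_eq_one_of_lt_abs hν0.le hx, Gderiv_eq_one_of_lt_abs hν0.le hy]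
  have hGinv : LipschitzWith (2⁻¹)⁻¹ Ginv :=
    lipschitzWith_of_rightInverse_of_le_deriv (hasDerivAt_Gfun hν0) (by norm_num)
      (fun x => by push_cast; linarith [(abs_le.1 (hnear x)).1]) hGinv2
  obtain ⟨C', hC'⟩ := hC.comp_lipschitzWith hℓσ0 hGinv
  exact ⟨max C' 1, by positivity, hC'.mono (le_max_left _ _)⟩

/-- Under (A1)-(A4), the transformed diffusion `σ̃` satisfies condition (A3). -/
theorem stmt_10 (p₀ p₁ ℓμ ℓσ : ℝ) (hp₀ : 2 ≤ p₀) (hp₁ : 2 ≤ p₁)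
    (hℓμ : 0 < ℓμ) (hℓσ0 : 0 ≤ ℓσ) (hℓσ : ℓσ ≤ ℓμ / 2)
    (μ σ : ℝ → ℝ)
    -- (A1)
    (c₁ : ℝ) (hc₁ : 0 < c₁)
    (hA1 : ∀ x : ℝ, 2 * x * μ x + (p₀ - 1) * (σ x) ^ 2 ≤ c₁ * (1 + x ^ 2))
    -- (A2): discontinuity points ξ₁ < … < ξ_k, k ≥ 1
    (c₂ : ℝ) (hc₂ : 0 < c₂) (k : ℕ) (hk : 1 ≤ k) (ξ : Fin k → ℝ) (hξ : StrictMono ξ)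
    (hA2i : ∀ i : Fin (k + 1), ∀ x ∈ piece k ξ i, ∀ y ∈ piece k ξ i,
      2 * (x - y) * (μ x - μ y) + (p₁ - 1) * (σ x - σ y) ^ 2 ≤ c₂ * |x - y| ^ 2)
    (hA2ii : ∀ i : Fin (k + 1), ∀ x ∈ piece k ξ i, ∀ y ∈ piece k ξ i,
      |μ x - μ y| ≤ c₂ * (1 + |x| ^ ℓμ + |y| ^ ℓμ) * |x - y|)
    -- (A3)
    (c₃ : ℝ) (hc₃ : 0 < c₃)
    (hA3 : ∀ x y : ℝ, |σ x - σ y| ≤ c₃ * (1 + |x| ^ ℓσ + |y| ^ ℓσ) * |x - y|)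
    -- (A4)
    (hA4 : ∀ i : Fin k, σ (ξ i) ≠ 0)
    -- one-sided limits μ(ξ_i-) and μ(ξ_i+)
    (μm μp : Fin k → ℝ)
    (hμm : ∀ i : Fin k, Filter.Tendsto μ (nhdsWithin (ξ i) (Set.Iio (ξ i))) (nhds (μm i)))
    (hμp : ∀ i : Fin k, Filter.Tendsto μ (nhdsWithin (ξ i) (Set.Ioi (ξ i))) (nhds (μp i)))
    -- α_i = (μ(ξ_i-) - μ(ξ_i+)) / (2 σ(ξ_i)²)
    (α : Fin k → ℝ) (hα : ∀ i : Fin k, α i = (μm i - μp i) / (2 * (σ (ξ i)) ^ 2))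
    -- ν ∈ (0, ρ_{ξ,α}):  ν·8|α_i| < 1 encodes ν < 1/(8|α_i|) with the convention 1/0 = ∞
    (ν : ℝ) (hν0 : 0 < ν)
    (hν1 : ∀ i : Fin k, ν * (8 * |α i|) < 1)
    (hν2 : ∀ i j : Fin k, (i : ℕ) + 1 = (j : ℕ) → ν < (ξ j - ξ i) / 2)
    -- G is differentiable with derivative G'; G' is differentiable off the points ξ_i
    -- with derivative G'', extended to the points ξ_i by the prescribed formula
    (G' G'' Ginv : ℝ → ℝ)
    (hG' : ∀ x : ℝ, HasDerivAt (Gfun k ξ α ν) (G' x) x)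
    (hG''a : ∀ x : ℝ, (∀ i : Fin k, x ≠ ξ i) → HasDerivAt G' (G'' x) x)
    (hG''b : ∀ i : Fin k, G'' (ξ i) = 2 * α i + 2 * (μp i - μ (ξ i)) / (σ (ξ i)) ^ 2)
    -- Ginv is the inverse of the bijection G
    (hGinv1 : ∀ x : ℝ, Ginv (Gfun k ξ α ν x) = x)
    (hGinv2 : ∀ x : ℝ, Gfun k ξ α ν (Ginv x) = x) :
    -- μ̃ = (G'·μ + ½·G''·σ²) ∘ G⁻¹  and  σ̃ = (G'·σ) ∘ G⁻¹
    ∃ c : ℝ, 0 < c ∧ ∀ x y : ℝ,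
      |(G' (Ginv x) * σ (Ginv x)) - (G' (Ginv y) * σ (Ginv y))|
        ≤ c * (1 + |x| ^ ℓσ + |y| ^ ℓσ) * |x - y| :=
  stmt_10_general ℓσ hℓσ0 σ k ξ hξ c₃ hA3 α ν hν0 hν1 hν2 G' Ginv hG' hGinv2
end

section
/- Assume μ, σ : ℝ → ℝ satisfy conditions (A2)(ii) and (A3) with parameters ℓ_μ ∈ (0,∞) and ℓ_σ ∈ [0, ℓ_μ/2]. Then there exists c ∈ (0,∞) such that for all n ∈ ℕ with n ≥ 1 and all x ∈ ℝ, the tamed coefficients satisfy σ_n(x)² ≤ c·min(√n·(1+x²), σ(x)²) and |μ_n(x)| ≤ c·min(√n·(1+|x|), |μ(x)|). -/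
/-- The tamed coefficient `f_n(x) = f(x) / (1 + n^{-1/2} |x|^ℓ)`. -/
noncomputable def tame (f : ℝ → ℝ) (ℓ : ℝ) (n : ℕ) (x : ℝ) : ℝ :=
  f x / (1 + (1 / Real.sqrt (n : ℝ)) * |x| ^ ℓ)

open Filter

section Weights

variable {t u ℓ : ℝ}

lemma le_one_add_rpow_mul (ht : 0 ≤ t) (hℓ : 0 ≤ ℓ) (hu : 0 ≤ u) (hu1 : t ≤ 1 → u ≤ 1) :
    u ≤ 1 + t ^ ℓ * u := by
  rcases le_or_gt t 1 with h | h
  · linarith [hu1 h, mul_nonneg (Real.rpow_nonneg ht ℓ) hu]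
  · linarith [le_mul_of_one_le_left hu (Real.one_le_rpow h.le hℓ)]

lemma rpow_le_one_add_rpow_mul_self (ht : 0 ≤ t) (hℓ : 0 ≤ ℓ) : t ^ ℓ ≤ 1 + t ^ ℓ * t := by
  rcases le_or_gt t 1 with h | h
  · linarith [Real.rpow_le_one ht h hℓ, mul_nonneg (Real.rpow_nonneg ht ℓ) ht]
  · linarith [le_mul_of_one_le_right (Real.rpow_nonneg ht ℓ) h.le]

lemma rpow_le_one_add_rpow {a b : ℝ} (ht : 0 ≤ t) (ha : 0 ≤ a) (hab : a ≤ b) :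
    t ^ a ≤ 1 + t ^ b := by
  rcases le_or_gt t 1 with h | h
  · linarith [Real.rpow_le_one ht h ha, Real.rpow_nonneg ht b]
  · linarith [Real.rpow_le_rpow_of_exponent_le h.le hab]

lemma one_add_rpow_mul_sq_le {a b : ℝ} (ht : 0 ≤ t) (ha : 0 ≤ a) (hab : 2 * a ≤ b) :
    (1 + t ^ a * t) ^ 2 ≤ 4 * (1 + t ^ b * t ^ 2) := by
  have hpow : (t ^ a * t) ^ 2 = t ^ (2 * a) * t ^ 2 := by
    rw [mul_pow, ← Real.rpow_natCast (t ^ a), ← Real.rpow_mul ht, mul_comm a]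
    norm_num
  have h2a : t ^ (2 * a) ≤ 1 + t ^ b := rpow_le_one_add_rpow ht (by linarith) hab
  have hsq : t ^ 2 ≤ 1 + t ^ b * t ^ 2 :=
    le_one_add_rpow_mul ht (by linarith) (sq_nonneg t) fun h => pow_le_one₀ ht h
  nlinarith [sq_nonneg (1 - t ^ a * t), mul_le_mul_of_nonneg_right h2a (sq_nonneg t)]

end Weights

section Growth

variable {f : ℝ → ℝ} {c ℓ : ℝ}

lemma abs_le_mul_one_add_rpow_mul_of_lipschitz_bound (hc : 0 ≤ c) (hℓ : 0 ≤ ℓ) {x y : ℝ}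
    (h : |f x - f y| ≤ c * (1 + |x| ^ ℓ + |y| ^ ℓ) * |x - y|) :
    |f x| ≤ (|f y| + c * (2 + |y| ^ ℓ) * (1 + |y|)) * (1 + |x| ^ ℓ * |x|) := by
  set w := 1 + |x| ^ ℓ * |x|
  have hx := abs_nonneg x
  have hy := abs_nonneg y
  have hxℓ := Real.rpow_nonneg hx ℓ
  have hyℓ := Real.rpow_nonneg hy ℓ
  have hw1 : 1 ≤ w := by simp only [w]; linarith [mul_nonneg hxℓ hx]
  have hxw : |x| ≤ w := le_one_add_rpow_mul hx hℓ hx id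
  have hxℓw : |x| ^ ℓ ≤ w := rpow_le_one_add_rpow_mul_self hx hℓ
  have hprod : (1 + |x| ^ ℓ + |y| ^ ℓ) * (|x| + |y|) ≤ (2 + |y| ^ ℓ) * (1 + |y|) * w := by
    nlinarith [mul_le_mul_of_nonneg_left hxw hyℓ, mul_le_mul_of_nonneg_left hxℓw hy,
      mul_le_mul_of_nonneg_left hw1 (mul_nonneg hy (add_nonneg zero_le_one hyℓ))]
  have hdiff : |f x - f y| ≤ c * ((2 + |y| ^ ℓ) * (1 + |y|) * w) :=
    calc |f x - f y| ≤ c * (1 + |x| ^ ℓ + |y| ^ ℓ) * |x - y| := h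
      _ ≤ c * ((1 + |x| ^ ℓ + |y| ^ ℓ) * (|x| + |y|)) := by
        rw [mul_assoc]; gcongr; exact abs_sub _ _
      _ ≤ c * ((2 + |y| ^ ℓ) * (1 + |y|) * w) := by gcongr
  nlinarith [abs_sub_abs_le_abs_sub (f x) (f y), le_mul_of_one_le_right (abs_nonneg (f y)) hw1]

lemma exists_abs_le_on_of_lipschitz_bound {s : Set ℝ} (hc : 0 ≤ c) (hℓ : 0 ≤ ℓ)
    (h : ∀ x ∈ s, ∀ y ∈ s, |f x - f y| ≤ c * (1 + |x| ^ ℓ + |y| ^ ℓ) * |x - y|) :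
    ∃ K, ∀ x ∈ s, |f x| ≤ K * (1 + |x| ^ ℓ * |x|) := by
  rcases s.eq_empty_or_nonempty with rfl | ⟨y, hy⟩
  · exact ⟨0, by simp⟩
  · exact ⟨_, fun x hx => abs_le_mul_one_add_rpow_mul_of_lipschitz_bound hc hℓ (h x hx y hy)⟩

lemma exists_abs_le_of_finite_cover {ι : Type*} [Finite ι] {s : ι → Set ℝ}
    (hs : ∀ x, ∃ i, x ∈ s i) (hc : 0 ≤ c) (hℓ : 0 ≤ ℓ)
    (h : ∀ i, ∀ x ∈ s i, ∀ y ∈ s i, |f x - f y| ≤ c * (1 + |x| ^ ℓ + |y| ^ ℓ) * |x - y|) :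
    ∃ C, ∀ x, |f x| ≤ C * (1 + |x| ^ ℓ * |x|) := by
  choose K hK using fun i => exists_abs_le_on_of_lipschitz_bound hc hℓ (h i)
  obtain ⟨C, hC⟩ := Finite.exists_le K
  refine ⟨C, fun x => ?_⟩
  obtain ⟨i, hi⟩ := hs x
  have hw : 0 ≤ 1 + |x| ^ ℓ * |x| := by positivity
  exact (hK i x hi).trans (mul_le_mul_of_nonneg_right (hC i) hw)

lemma exists_mem_piece {k : ℕ} {ξ : Fin k → ℝ} (hξ : Monotone ξ) {x : ℝ} (hx : ∀ j, ξ j ≠ x) :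
    ∃ i, x ∈ piece k ξ i := by
  classical
  -- `i` is the index of the first breakpoint to the right of `x`, or `k` if there is none.
  have hP : ∃ m, k ≤ m ∨ ∃ j : Fin k, (j : ℕ) = m ∧ x < ξ j := ⟨k, Or.inl le_rfl⟩
  refine ⟨⟨Nat.find hP, Nat.lt_succ_of_le (Nat.find_min' hP (Or.inl le_rfl))⟩,
    fun j hj => ?_, fun j hj => ?_⟩
  · have hj' := Nat.find_min hP hj
    push Not at hj'
    exact (hj'.2 j rfl).lt_of_ne (hx j)
  · rcases Nat.find_spec hP with h | ⟨j', hj', h⟩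
    · exact absurd j.isLt (by simp only at hj; omega)
    · exact h.trans_le (hξ (Fin.le_def.mpr (by simp only at hj; omega)))

lemma exists_abs_le_of_piecewise_lipschitz_bound {k : ℕ} {ξ : Fin k → ℝ} (hξ : Monotone ξ)
    (hc : 0 ≤ c) (hℓ : 0 ≤ ℓ)
    (h : ∀ i : Fin (k + 1), ∀ x ∈ piece k ξ i, ∀ y ∈ piece k ξ i,
      |f x - f y| ≤ c * (1 + |x| ^ ℓ + |y| ^ ℓ) * |x - y|) :
    ∃ C, ∀ x, |f x| ≤ C * (1 + |x| ^ ℓ * |x|) := by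
  -- The breakpoints themselves are covered by singletons, on which the bound is trivial.
  refine exists_abs_le_of_finite_cover (s := Sum.elim (piece k ξ) fun j => {ξ j})
    (fun x => ?_) hc hℓ ?_
  · by_cases hx : ∀ j, ξ j ≠ x
    · obtain ⟨i, hi⟩ := exists_mem_piece hξ hx
      exact ⟨.inl i, hi⟩
    · push Not at hx
      obtain ⟨j, rfl⟩ := hx
      exact ⟨.inr j, rfl⟩
  · rintro (i | j)
    · exact h i
    · rintro x rfl y rfl
      simp

lemma exists_sq_le_of_lipschitz_bound {a b : ℝ} (hc : 0 ≤ c) (ha : 0 ≤ a) (hab : 2 * a ≤ b)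
    (h : ∀ x y, |f x - f y| ≤ c * (1 + |x| ^ a + |y| ^ a) * |x - y|) :
    ∃ C, ∀ x, f x ^ 2 ≤ C * (1 + |x| ^ b * x ^ 2) := by
  set K := |f 0| + c * (2 + |(0 : ℝ)| ^ a) * (1 + |(0 : ℝ)|)
  refine ⟨4 * K ^ 2, fun x => ?_⟩
  have hf := abs_le_mul_one_add_rpow_mul_of_lipschitz_bound hc ha (h x 0)
  calc f x ^ 2 = |f x| ^ 2 := (sq_abs _).symm
    _ ≤ (K * (1 + |x| ^ a * |x|)) ^ 2 := pow_le_pow_left₀ (abs_nonneg _) hf 2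
    _ = K ^ 2 * (1 + |x| ^ a * |x|) ^ 2 := mul_pow _ _ _
    _ ≤ K ^ 2 * (4 * (1 + |x| ^ b * |x| ^ 2)) := by
      gcongr; exact one_add_rpow_mul_sq_le (abs_nonneg x) ha hab
    _ = 4 * K ^ 2 * (1 + |x| ^ b * x ^ 2) := by rw [sq_abs]; ring

lemma eventually_forall_le_mul {g w : ℝ → ℝ} (hw : ∀ x, 0 ≤ w x) (h : ∃ C, ∀ x, g x ≤ C * w x) :
    ∀ᶠ C in atTop, ∀ x, g x ≤ C * w x := by
  obtain ⟨C₀, hC₀⟩ := h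
  filter_upwards [eventually_ge_atTop C₀] with C hC x
  exact (hC₀ x).trans (mul_le_mul_of_nonneg_right hC (hw x))

end Growth

section Taming

variable {f : ℝ → ℝ} {ℓ C : ℝ} {n : ℕ} {x : ℝ}

lemma div_one_add_div_mul_le {g s a t : ℝ} (hs : 1 ≤ s) (ha : 0 ≤ a) (ht : 0 ≤ t) (hC : 0 ≤ C)
    (hg : g ≤ C * (1 + a * t)) : g / (1 + 1 / s * a) ≤ C * (s * (1 + t)) := by
  have hs0 : 0 < s := one_pos.trans_le hs
  rw [div_le_iff₀ (by positivity)]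
  have key : 1 + a * t ≤ s * (1 + t) * (1 + 1 / s * a) := by
    rw [show s * (1 + t) * (1 + 1 / s * a) = (s + a) * (1 + t) by field_simp]
    nlinarith
  calc g ≤ C * (1 + a * t) := hg
    _ ≤ C * (s * (1 + t) * (1 + 1 / s * a)) := by gcongr
    _ = C * (s * (1 + t)) * (1 + 1 / s * a) := by ring

lemma one_le_taming_factor : 1 ≤ 1 + 1 / Real.sqrt n * |x| ^ ℓ := by
  have : 0 ≤ 1 / Real.sqrt n * |x| ^ ℓ := by positivity
  linarith

lemma abs_tame_le : |tame f ℓ n x| ≤ |f x| := by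
  rw [tame, abs_div, abs_of_pos (one_pos.trans_le one_le_taming_factor)]
  exact div_le_self (abs_nonneg _) one_le_taming_factor

lemma abs_tame_le_mul_min (hn : 1 ≤ n) (hC : 1 ≤ C) (h : |f x| ≤ C * (1 + |x| ^ ℓ * |x|)) :
    |tame f ℓ n x| ≤ C * min (Real.sqrt n * (1 + |x|)) |f x| := by
  rw [mul_min_of_nonneg _ _ (by linarith)]
  refine le_min ?_ (abs_tame_le.trans (le_mul_of_one_le_left (abs_nonneg _) hC))
  rw [tame, abs_div, abs_of_pos (one_pos.trans_le one_le_taming_factor)]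
  exact div_one_add_div_mul_le (Real.one_le_sqrt.mpr (by exact_mod_cast hn))
    (by positivity) (abs_nonneg x) (by linarith) h

lemma sq_tame_le_mul_min (hn : 1 ≤ n) (hC : 1 ≤ C) (h : f x ^ 2 ≤ C * (1 + |x| ^ ℓ * x ^ 2)) :
    tame f ℓ n x ^ 2 ≤ C * min (Real.sqrt n * (1 + x ^ 2)) (f x ^ 2) := by
  rw [mul_min_of_nonneg _ _ (by linarith)]
  have hsq : tame f ℓ n x ^ 2 ≤ f x ^ 2 := by
    rw [← sq_abs (tame f ℓ n x), ← sq_abs (f x)]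
    exact pow_le_pow_left₀ (abs_nonneg _) abs_tame_le 2
  refine le_min ?_ (hsq.trans (le_mul_of_one_le_left (sq_nonneg _) hC))
  rw [tame, div_pow, sq (1 + _), ← div_div]
  calc f x ^ 2 / (1 + 1 / Real.sqrt n * |x| ^ ℓ) / (1 + 1 / Real.sqrt n * |x| ^ ℓ)
      ≤ f x ^ 2 / (1 + 1 / Real.sqrt n * |x| ^ ℓ) :=
        div_le_self (by positivity) one_le_taming_factor
    _ ≤ C * (Real.sqrt n * (1 + x ^ 2)) :=
        div_one_add_div_mul_le (Real.one_le_sqrt.mpr (by exact_mod_cast hn))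
          (by positivity) (sq_nonneg x) (by linarith) h

end Taming

/-- If `μ, σ` satisfy (A2)(ii) and (A3) with `ℓμ ∈ (0,∞)` and
`ℓσ ∈ [0, ℓμ/2]`, then there is `c ∈ (0,∞)` such that for all `n ≥ 1` and all `x`,
`σ_n(x)² ≤ c·min(√n·(1+x²), σ(x)²)` and `|μ_n(x)| ≤ c·min(√n·(1+|x|), |μ(x)|)`. -/
theorem stmt_13 (ℓμ ℓσ : ℝ) (hℓμ : 0 < ℓμ) (hℓσ0 : 0 ≤ ℓσ) (hℓσ : ℓσ ≤ ℓμ / 2)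
    (μ σ : ℝ → ℝ)
    (c₂ : ℝ) (hc₂ : 0 < c₂) (k : ℕ) (ξ : Fin k → ℝ) (hξ : StrictMono ξ)
    (hA2ii : ∀ i : Fin (k + 1), ∀ x ∈ piece k ξ i, ∀ y ∈ piece k ξ i,
      |μ x - μ y| ≤ c₂ * (1 + |x| ^ ℓμ + |y| ^ ℓμ) * |x - y|)
    (c₃ : ℝ) (hc₃ : 0 < c₃)
    (hA3 : ∀ x y : ℝ, |σ x - σ y| ≤ c₃ * (1 + |x| ^ ℓσ + |y| ^ ℓσ) * |x - y|) :
    ∃ c : ℝ, 0 < c ∧ ∀ n : ℕ, 1 ≤ n → ∀ x : ℝ,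
      (tame σ ℓμ n x) ^ 2 ≤ c * min (Real.sqrt (n : ℝ) * (1 + x ^ 2)) ((σ x) ^ 2) ∧
      |tame μ ℓμ n x| ≤ c * min (Real.sqrt (n : ℝ) * (1 + |x|)) |μ x| := by
  have hσ := eventually_forall_le_mul (fun x => by positivity)
    (exists_sq_le_of_lipschitz_bound hc₃.le hℓσ0 (show 2 * ℓσ ≤ ℓμ by linarith) hA3)
  have hμ := eventually_forall_le_mul (fun x => by positivity)
    (exists_abs_le_of_piecewise_lipschitz_bound hξ.monotone hc₂.le hℓμ.le hA2ii)
  obtain ⟨c, hc, hσc, hμc⟩ := ((eventually_ge_atTop 1).and (hσ.and hμ)).exists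
  exact ⟨c, one_pos.trans_le hc, fun n hn x =>
    ⟨sq_tame_le_mul_min hn hc (hσc x), abs_tame_le_mul_min hn hc (hμc x)⟩⟩
end
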